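/- arXiv:2404.13529 — 6 statements merged into one kernel-verified Lean document; each statement's English description precedes it below -/
import Mathlib

section
/- Let G be an undirected graph on N vertices with Laplacian L = E Eᵀ for an incidence matrix E, let M ∈ ℝ^{m×m} satisfy M + Mᵀ ⪯ 0, and let F ∈ ℝ^{Nm×Nm} be block diagonal with blocks F_i satisfying F_i + F_iᵀ ⪯ 0. Then the symmetric part of F + L⊗M is negative semidefinite, i.e., vᵀ(F + L⊗M)v ≤ 0 for all v ∈ ℝ^{Nm}. -/
/-!
Since `wᵀAᵀw = wᵀAw`, the hypotheses say that `M` and each `Fᵢ` have nonpositive quadratic forms.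
Writing `v = (v₁, …, v_N)` in blocks, the quadratic form of the block-diagonal `F` is
`∑ᵢ vᵢᵀ Fᵢ vᵢ ≤ 0`. For the coupling term, `L ⊗ M = (E ⊗ I)(I ⊗ M)(E ⊗ I)ᵀ`, so its quadratic
form at `v` is that of the block-diagonal `I ⊗ M` at `y = (E ⊗ I)ᵀ v`, again `≤ 0`.
-/

open Matrix
open scoped Kronecker

variable {R n o k : Type*}

section CommSemiring

variable [CommSemiring R]

theorem one_kronecker_apply [DecidableEq n] (M : Matrix o o R) (p q : n × o) :
    ((1 : Matrix n n R) ⊗ₖ M) p q = if p.1 = q.1 then M p.2 q.2 else 0 := by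
  simp [one_apply, ite_mul]

variable [Fintype o] [Fintype k]

theorem mul_transpose_kronecker [DecidableEq o] [DecidableEq k] (E : Matrix n k R)
    (M : Matrix o o R) :
    (E * Eᵀ) ⊗ₖ M =
      (E ⊗ₖ (1 : Matrix o o R)) * ((1 : Matrix k k R) ⊗ₖ M) * (E ⊗ₖ (1 : Matrix o o R))ᵀ := by
  rw [← kroneckerMap_transpose, transpose_one, ← mul_kronecker_mul, ← mul_kronecker_mul]
  simp

variable [Fintype n]

theorem dotProduct_mulVec_eq_sum_blocks [DecidableEq n] (B : n → Matrix o o R)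
    (G : Matrix (n × o) (n × o) R)
    (hG : ∀ p q, G p q = if p.1 = q.1 then B p.1 p.2 q.2 else 0) (v : n × o → R) :
    v ⬝ᵥ (G *ᵥ v) = ∑ i, (fun a => v (i, a)) ⬝ᵥ (B i *ᵥ fun a => v (i, a)) := by
  simp [dotProduct, mulVec, Fintype.sum_prod_type, hG, ite_mul, Finset.sum_ite_eq]

theorem dotProduct_mul_mul_transpose_mulVec (A : Matrix n k R) (B : Matrix k k R) (v : n → R) :
    v ⬝ᵥ ((A * B * Aᵀ) *ᵥ v) = (Aᵀ *ᵥ v) ⬝ᵥ (B *ᵥ (Aᵀ *ᵥ v)) := by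
  rw [← mulVec_mulVec, ← mulVec_mulVec, dotProduct_mulVec, ← mulVec_transpose]

end CommSemiring

section Ordered

variable [CommRing R] [LinearOrder R] [IsStrictOrderedRing R] [Fintype n] [Fintype o]
  [Fintype k]

theorem dotProduct_mulVec_nonpos_of_add_transpose {A : Matrix n n R}
    (hA : ∀ w : n → R, w ⬝ᵥ ((A + Aᵀ) *ᵥ w) ≤ 0) (w : n → R) : w ⬝ᵥ (A *ᵥ w) ≤ 0 := by
  have h := hA w
  rw [add_mulVec, dotProduct_add, dotProduct_transpose_mulVec] at h
  linarith

theorem dotProduct_mulVec_nonpos_of_blocks [DecidableEq n] {B : n → Matrix o o R}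
    (hB : ∀ i, ∀ w : o → R, w ⬝ᵥ (B i *ᵥ w) ≤ 0) {G : Matrix (n × o) (n × o) R}
    (hG : ∀ p q, G p q = if p.1 = q.1 then B p.1 p.2 q.2 else 0) (v : n × o → R) :
    v ⬝ᵥ (G *ᵥ v) ≤ 0 := by
  rw [dotProduct_mulVec_eq_sum_blocks B G hG]
  exact Finset.sum_nonpos fun i _ => hB i _

theorem dotProduct_mul_transpose_kronecker_mulVec_nonpos [DecidableEq o] [DecidableEq k]
    (E : Matrix n k R) {M : Matrix o o R} (hM : ∀ w : o → R, w ⬝ᵥ (M *ᵥ w) ≤ 0)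
    (v : n × o → R) : v ⬝ᵥ (((E * Eᵀ) ⊗ₖ M) *ᵥ v) ≤ 0 := by
  rw [mul_transpose_kronecker, dotProduct_mul_mul_transpose_mulVec]
  exact dotProduct_mulVec_nonpos_of_blocks (fun _ => hM) (one_kronecker_apply M) _

end Ordered

/-- For an undirected graph with Laplacian `L = E Eᵀ`, `M` with
`M + Mᵀ ⪯ 0`, and blockdiagonal `F` with blocks `Fᵢ` satisfying `Fᵢ + Fᵢᵀ ⪯ 0`,
the symmetric part of `F + L ⊗ M` is negative semidefinite. -/
theorem symmetric_part_neg_semidef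
    (N m ι : ℕ) (Einc : Matrix (Fin N) (Fin ι) ℝ)
    (L : Matrix (Fin N) (Fin N) ℝ) (hL : L = Einc * Eincᵀ)
    (M : Matrix (Fin m) (Fin m) ℝ)
    (hM : ∀ w : Fin m → ℝ, w ⬝ᵥ ((M + Mᵀ) *ᵥ w) ≤ 0)
    (Fi : Fin N → Matrix (Fin m) (Fin m) ℝ)
    (hFi : ∀ i, ∀ w : Fin m → ℝ, w ⬝ᵥ ((Fi i + (Fi i)ᵀ) *ᵥ w) ≤ 0)
    (F : Matrix (Fin N × Fin m) (Fin N × Fin m) ℝ)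
    (hF : ∀ p q, F p q = if p.1 = q.1 then Fi p.1 p.2 q.2 else 0) :
    ∀ v : Fin N × Fin m → ℝ, v ⬝ᵥ ((F + L ⊗ₖ M) *ᵥ v) ≤ 0 := by
  intro v
  have hF_nonpos : v ⬝ᵥ (F *ᵥ v) ≤ 0 :=
    dotProduct_mulVec_nonpos_of_blocks
      (fun i => dotProduct_mulVec_nonpos_of_add_transpose (hFi i)) hF v
  have hLM_nonpos : v ⬝ᵥ ((L ⊗ₖ M) *ᵥ v) ≤ 0 := by
    rw [hL]
    exact dotProduct_mul_transpose_kronecker_mulVec_nonpos Einc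
      (dotProduct_mulVec_nonpos_of_add_transpose hM) v
  rw [add_mulVec, dotProduct_add]
  exact add_nonpos hF_nonpos hLM_nonpos
end

section
/- Let φ: ℝⁿ → ℝⁿ satisfy the strict incremental passivity property (u − v)ᵀ(φ(u) − φ(v)) ≤ 0 with equality only when u = v, let S ∈ ℝⁿˣⁿ satisfy S + Sᵀ ⪯ 0, and let x* satisfy S∇H(x*) + φ(∇H(x*)) = 0 for a differentiable strongly convex H: ℝⁿ → ℝ. Then along any solution of ẋ = S∇H(x) + φ(∇H(x)), the function V(x) = H(x) − H(x*) − ∇H(x*)ᵀ(x − x*) satisfies V̇(x) ≤ 0, with V̇(x) = 0 only if ∇H(x) = ∇H(x*). -/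
/-!
Along the flow, `V̇(x) = (g - g*) ⬝ (S g + φ g)` with `g = ∇H(x)`, `g* = ∇H(x*)`. Subtracting the
equilibrium identity `S g* + φ g* = 0` splits it as `(g - g*) ⬝ S (g - g*) + (g - g*) ⬝ (φ g - φ g*)`:
the first term is the quadratic form of `(S + Sᵀ) / 2`, hence nonpositive, and the second is
nonpositive by incremental passivity, vanishing only at `g = g*`.
-/

open Matrix

section

variable {ι R : Type*} [Fintype ι] [CommRing R]

theorem Matrix.dotProduct_transpose_mulVec_self (S : Matrix ι ι R) (v : ι → R) :
    v ⬝ᵥ (Sᵀ *ᵥ v) = v ⬝ᵥ (S *ᵥ v) := by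
  rw [mulVec_transpose, dotProduct_comm, dotProduct_mulVec]

theorem Matrix.dotProduct_mulVec_self_nonpos [LinearOrder R] [IsStrictOrderedRing R]
    {S : Matrix ι ι R} (hS : ∀ v, v ⬝ᵥ ((S + Sᵀ) *ᵥ v) ≤ 0) (v : ι → R) :
    v ⬝ᵥ (S *ᵥ v) ≤ 0 := by
  have h := hS v
  rw [add_mulVec, dotProduct_add, dotProduct_transpose_mulVec_self] at h
  linarith

theorem dotProduct_sub_equilibrium_eq (S : Matrix ι ι R) (φ : (ι → R) → ι → R)
    {g gs : ι → R} (heq : S *ᵥ gs + φ gs = 0) :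
    (g - gs) ⬝ᵥ (S *ᵥ g + φ g) = (g - gs) ⬝ᵥ (S *ᵥ (g - gs)) + (g - gs) ⬝ᵥ (φ g - φ gs) := by
  have hsplit : S *ᵥ g + φ g = S *ᵥ (g - gs) + (φ g - φ gs) + (S *ᵥ gs + φ gs) := by
    rw [mulVec_sub]; abel
  rw [hsplit, heq, add_zero, dotProduct_add]

theorem dotProduct_sub_equilibrium_nonpos [LinearOrder R] [IsStrictOrderedRing R]
    {S : Matrix ι ι R} (hS : ∀ v, v ⬝ᵥ ((S + Sᵀ) *ᵥ v) ≤ 0) {φ : (ι → R) → ι → R}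
    (hφ : ∀ u v, (u - v) ⬝ᵥ (φ u - φ v) ≤ 0)
    (hφeq : ∀ u v, (u - v) ⬝ᵥ (φ u - φ v) = 0 → u = v)
    {g gs : ι → R} (heq : S *ᵥ gs + φ gs = 0) :
    (g - gs) ⬝ᵥ (S *ᵥ g + φ g) ≤ 0 ∧ ((g - gs) ⬝ᵥ (S *ᵥ g + φ g) = 0 → g = gs) := by
  rw [dotProduct_sub_equilibrium_eq S φ heq]
  have hSd := dotProduct_mulVec_self_nonpos hS (g - gs)
  have hφd := hφ g gs
  exact ⟨add_nonpos hSd hφd, fun h ↦ hφeq g gs (by linarith)⟩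

end

theorem lyapunov_decrease_continuous_general (n : ℕ)
    (H : EuclideanSpace ℝ (Fin n) → ℝ)
    (S : Matrix (Fin n) (Fin n) ℝ)
    (hS : ∀ v : Fin n → ℝ, v ⬝ᵥ ((S + Sᵀ) *ᵥ v) ≤ 0)
    (φ : (Fin n → ℝ) → (Fin n → ℝ))
    (hφ : ∀ u v : Fin n → ℝ, (u - v) ⬝ᵥ (φ u - φ v) ≤ 0)
    (hφeq : ∀ u v : Fin n → ℝ, (u - v) ⬝ᵥ (φ u - φ v) = 0 → u = v)
    (xs : EuclideanSpace ℝ (Fin n))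
    (heq : S *ᵥ (fun i => gradient H xs i) + φ (fun i => gradient H xs i) = 0) :
    ∀ x : EuclideanSpace ℝ (Fin n),
      (fun i => gradient H x i - gradient H xs i) ⬝ᵥ
        (S *ᵥ (fun i => gradient H x i) + φ (fun i => gradient H x i)) ≤ 0 ∧
      ((fun i => gradient H x i - gradient H xs i) ⬝ᵥ
        (S *ᵥ (fun i => gradient H x i) + φ (fun i => gradient H x i)) = 0 →
        (fun i => gradient H x i) = (fun i => gradient H xs i)) :=
  fun _ ↦ dotProduct_sub_equilibrium_nonpos hS hφ hφeq heq

/-- If `φ` is strictly incrementally passive, `S + Sᵀ ⪯ 0`, `H` is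
differentiable strongly convex, and `x*` is an equilibrium of
`ẋ = S∇H(x) + φ(∇H(x))`, then `V̇(x) = ∇V(x)ᵀ(S∇H(x) + φ(∇H(x))) ≤ 0`,
with equality only if `∇H(x) = ∇H(x*)`. -/
theorem lyapunov_decrease_continuous (n : ℕ) (μ : ℝ) (hμ : 0 < μ)
    (H : EuclideanSpace ℝ (Fin n) → ℝ) (hdiff : Differentiable ℝ H)
    (hsc : ∀ u v : EuclideanSpace ℝ (Fin n),
      H v ≥ H u + inner (𝕜 := ℝ) (gradient H u) (v - u) + μ / 2 * ‖v - u‖ ^ 2)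
    (S : Matrix (Fin n) (Fin n) ℝ)
    (hS : ∀ v : Fin n → ℝ, v ⬝ᵥ ((S + Sᵀ) *ᵥ v) ≤ 0)
    (φ : (Fin n → ℝ) → (Fin n → ℝ))
    (hφ : ∀ u v : Fin n → ℝ, (u - v) ⬝ᵥ (φ u - φ v) ≤ 0)
    (hφeq : ∀ u v : Fin n → ℝ, (u - v) ⬝ᵥ (φ u - φ v) = 0 → u = v)
    (xs : EuclideanSpace ℝ (Fin n))
    (heq : S *ᵥ (fun i => gradient H xs i) + φ (fun i => gradient H xs i) = 0) :
    ∀ x : EuclideanSpace ℝ (Fin n),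
      (fun i => gradient H x i - gradient H xs i) ⬝ᵥ
        (S *ᵥ (fun i => gradient H x i) + φ (fun i => gradient H x i)) ≤ 0 ∧
      ((fun i => gradient H x i - gradient H xs i) ⬝ᵥ
        (S *ᵥ (fun i => gradient H x i) + φ (fun i => gradient H x i)) = 0 →
        (fun i => gradient H x i) = (fun i => gradient H xs i)) :=
  lyapunov_decrease_continuous_general n H S hS φ hφ hφeq xs heq
end

section
/- Let G be a connected undirected graph on N vertices with Laplacian L, and let f_i: ℝᵐ → ℝ be differentiable. Suppose q* ∈ ℝ^{Nm} and p* ∈ ℝ^{Nm} satisfy 0 = −(L⊗I_m)q* − (L⊗I_m)p* − ∇f(q*) and 0 = (L⊗I_m)q*, where f(q) = Σᵢ f_i(q_i). Then q* = 𝟙_N ⊗ θ* for some θ* ∈ ℝᵐ satisfying Σᵢ ∇f_i(θ*) = 0. -/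
/-!
The second equation puts `q*` in the kernel of `L ⊗ I`, which for a connected graph consists of
the consensus vectors `𝟙 ⊗ θ`. The first equation then reduces to `∇f(𝟙 ⊗ θ) = -(L ⊗ I) p*`, and
summing over the vertices kills the right-hand side because `𝟙ᵀ L = 0`.
-/

open Matrix
open scoped Kronecker

namespace Matrix

variable {R ι ι' κ : Type*} [Fintype ι'] [Fintype κ] [DecidableEq κ] [NonAssocSemiring R]

theorem kronecker_one_mulVec_apply (A : Matrix ι ι' R) (v : ι' × κ → R) (i : ι) (a : κ) :
    ((A ⊗ₖ (1 : Matrix κ κ R)) *ᵥ v) (i, a) = (A *ᵥ fun j => v (j, a)) i := by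
  simp only [mulVec, dotProduct, Fintype.sum_prod_type, kroneckerMap_apply, one_apply, mul_ite,
    mul_one, mul_zero, ite_mul, zero_mul, Finset.sum_ite_eq, Finset.mem_univ, if_true]

end Matrix

namespace SimpleGraph

variable {V κ : Type*} [Fintype V] [DecidableEq V] [Fintype κ] [DecidableEq κ]
  {G : SimpleGraph V} [DecidableRel G.Adj]

theorem sum_lapMatrix_kronecker_one_mulVec_apply {R : Type*} [CommRing R]
    (p : V × κ → R) (a : κ) :
    ∑ i, ((G.lapMatrix R ⊗ₖ (1 : Matrix κ κ R)) *ᵥ p) (i, a) = 0 := by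
  have hcol : (fun _ => 1) ᵥ* G.lapMatrix R = 0 := by
    rw [← mulVec_transpose, (G.isSymm_lapMatrix (R := R)).eq]
    exact G.lapMatrix_mulVec_const_eq_zero
  calc ∑ i, ((G.lapMatrix R ⊗ₖ (1 : Matrix κ κ R)) *ᵥ p) (i, a)
      = (fun _ => 1) ⬝ᵥ (G.lapMatrix R *ᵥ fun j => p (j, a)) := by
        simp only [kronecker_one_mulVec_apply, dotProduct, one_mul]
    _ = 0 := by rw [dotProduct_mulVec, hcol, zero_dotProduct]

theorem Connected.apply_eq_of_lapMatrix_kronecker_one_mulVec_eq_zero (hG : G.Connected)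
    {q : V × κ → ℝ} (hq : (G.lapMatrix ℝ ⊗ₖ (1 : Matrix κ κ ℝ)) *ᵥ q = 0) (i j : V) (a : κ) :
    q (i, a) = q (j, a) := by
  have hslice : G.lapMatrix ℝ *ᵥ (fun k => q (k, a)) = 0 := funext fun k => by
    rw [← kronecker_one_mulVec_apply, hq, Pi.zero_apply, Pi.zero_apply]
  exact G.lapMatrix_mulVec_eq_zero_iff_forall_reachable.mp hslice i j (hG.preconnected i j)

end SimpleGraph

theorem equilibrium_is_optimal_general (N m : ℕ)
    (G : SimpleGraph (Fin N)) [DecidableRel G.Adj] (hconn : G.Connected)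
    (f : Fin N → EuclideanSpace ℝ (Fin m) → ℝ)
    (L : Matrix (Fin N) (Fin N) ℝ) (hL : L = G.lapMatrix ℝ)
    (qs ps : Fin N × Fin m → ℝ)
    (gradf : (Fin N × Fin m → ℝ) → Fin N × Fin m → ℝ)
    (hgradf : ∀ q : Fin N × Fin m → ℝ, ∀ i a,
      gradf q (i, a) = gradient (f i) (WithLp.toLp 2 (fun b => q (i, b))) a)
    (heq1 : (0 : Fin N × Fin m → ℝ) =
      -((L ⊗ₖ (1 : Matrix (Fin m) (Fin m) ℝ)) *ᵥ qs)
        - (L ⊗ₖ (1 : Matrix (Fin m) (Fin m) ℝ)) *ᵥ ps - gradf qs)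
    (heq2 : (L ⊗ₖ (1 : Matrix (Fin m) (Fin m) ℝ)) *ᵥ qs = 0) :
    ∃ θs : EuclideanSpace ℝ (Fin m),
      (∀ i a, qs (i, a) = θs a) ∧ (∀ a, (∑ i, gradient (f i) θs a) = 0) := by
  subst hL
  obtain ⟨i₀⟩ := hconn.nonempty
  have hconsensus := hconn.apply_eq_of_lapMatrix_kronecker_one_mulVec_eq_zero heq2
  have hgrad : gradf qs = -((G.lapMatrix ℝ ⊗ₖ (1 : Matrix (Fin m) (Fin m) ℝ)) *ᵥ ps) := by
    rw [heq2, neg_zero, zero_sub] at heq1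
    exact (sub_eq_zero.mp heq1.symm).symm
  refine ⟨WithLp.toLp 2 fun a => qs (i₀, a), fun i a => hconsensus i i₀ a, fun a => ?_⟩
  calc ∑ i, gradient (f i) (WithLp.toLp 2 fun b => qs (i₀, b)) a
      = ∑ i, gradf qs (i, a) := by
        refine Finset.sum_congr rfl fun i _ => ?_
        rw [hgradf, funext fun b => hconsensus i₀ i b]
    _ = 0 := by
        simp only [hgrad, Pi.neg_apply, Finset.sum_neg_distrib,
          SimpleGraph.sum_lapMatrix_kronecker_one_mulVec_apply, neg_zero]

/-- For a connected graph with Laplacian `L` and differentiable `f_i`,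
if `0 = −(L⊗I)q* − (L⊗I)p* − ∇f(q*)` and `0 = (L⊗I)q*`, then `q* = 𝟙 ⊗ θ*`
with `Σᵢ ∇fᵢ(θ*) = 0`. -/
theorem equilibrium_is_optimal (N m : ℕ)
    (G : SimpleGraph (Fin N)) [DecidableRel G.Adj] (hconn : G.Connected)
    (f : Fin N → EuclideanSpace ℝ (Fin m) → ℝ) (hdiff : ∀ i, Differentiable ℝ (f i))
    (L : Matrix (Fin N) (Fin N) ℝ) (hL : L = G.lapMatrix ℝ)
    (qs ps : Fin N × Fin m → ℝ)
    (gradf : (Fin N × Fin m → ℝ) → Fin N × Fin m → ℝ)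
    (hgradf : ∀ q : Fin N × Fin m → ℝ, ∀ i a,
      gradf q (i, a) = gradient (f i) (WithLp.toLp 2 (fun b => q (i, b))) a)
    (heq1 : (0 : Fin N × Fin m → ℝ) =
      -((L ⊗ₖ (1 : Matrix (Fin m) (Fin m) ℝ)) *ᵥ qs)
        - (L ⊗ₖ (1 : Matrix (Fin m) (Fin m) ℝ)) *ᵥ ps - gradf qs)
    (heq2 : (L ⊗ₖ (1 : Matrix (Fin m) (Fin m) ℝ)) *ᵥ qs = 0) :
    ∃ θs : EuclideanSpace ℝ (Fin m),
      (∀ i a, qs (i, a) = θs a) ∧ (∀ a, (∑ i, gradient (f i) θs a) = 0) :=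
  equilibrium_is_optimal_general N m G hconn f L hL qs ps gradf hgradf heq1 heq2
end

section
/- Let H: ℝⁿ → ℝ be differentiable and strongly convex, S ∈ ℝⁿˣⁿ with S + Sᵀ ⪯ 0, φ: ℝⁿ → ℝⁿ strictly incrementally passive, and x* the unique point with S∇H(x*) + φ(∇H(x*)) = 0. Let τ > 0 and suppose the sequence x[k] satisfies the implicit recursion (x⁺ − x)/τ = S ∇̄H(x, x⁺) + φ(∇̄H(x, x⁺)), where ∇̄H is the integral discrete gradient. Then V(x) = H(x) − H(x*) − ∇H(x*)ᵀ(x − x*) satisfies V(x⁺) − V(x) ≤ 0 for every step, with equality only when x = x⁺ = x*. -/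
open Matrix
open scoped RealInnerProductSpace

/-!
Write `g = ∇̄H(x, x⁺)` and `g* = ∇H(x*)`. The fundamental theorem of calculus along the segment
`[x, x⁺]` gives `H(x⁺) − H(x) = ⟨g, x⁺ − x⟩`, hence
`V(x⁺) − V(x) = ⟨g − g*, x⁺ − x⟩ = τ ⟨g − g*, S g + φ g⟩`. Since `S g* + φ g* = 0`, this equals
`τ (⟨g − g*, S (g − g*)⟩ + ⟨g − g*, φ g − φ g*⟩)`, a sum of two nonpositive terms. If it vanishes,
strict passivity forces `g = g*`, so the step is `x⁺ = x`, whence `g = ∇H(x)` and `x = x*` by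
uniqueness of the equilibrium.
-/

section DiscreteGradient

variable {E : Type*} [NormedAddCommGroup E] [InnerProductSpace ℝ E] {f : E → ℝ}

theorem norm_gradient_le_of_forall_le [CompleteSpace E]
    (hconv : ∀ x y, f x + ⟪gradient f x, y - x⟫ ≤ f y) {x : E} {M : ℝ}
    (hM : ∀ y ∈ Metric.closedBall x 1, f y ≤ M) : ‖gradient f x‖ ≤ M - f x := by
  set d := ‖gradient f x‖⁻¹ • gradient f x
  have hd : ‖d‖ ≤ 1 := by
    rw [norm_smul, norm_inv, norm_norm]
    exact inv_mul_le_one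
  have hinner : ⟪gradient f x, d⟫ = ‖gradient f x‖ := by
    rw [real_inner_smul_right, real_inner_self_eq_norm_sq]
    rcases eq_or_ne ‖gradient f x‖ 0 with h | h
    · simp [h]
    · field_simp
  have := hconv x (x + d)
  rw [add_sub_cancel_left, hinner] at this
  linarith [hM (x + d) (by simpa [dist_eq_norm] using hd)]

theorem bregman_sub_bregman_eq_inner {u v xs d g₀ : E} (h : f v - f u = ⟪d, v - u⟫) :
    (f v - f xs - ⟪g₀, v - xs⟫) - (f u - f xs - ⟪g₀, u - xs⟫) = ⟪d - g₀, v - u⟫ := by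
  rw [inner_sub_left, ← h, ← sub_sub_sub_cancel_right v u xs, inner_sub_right g₀ (v - xs)]
  ring

theorem IsCompact.exists_bound_norm_gradient [ProperSpace E] (hf : Continuous f)
    (hconv : ∀ x y, f x + ⟪gradient f x, y - x⟫ ≤ f y) {K : Set E} (hK : IsCompact K) :
    ∃ C, ∀ x ∈ K, ‖gradient f x‖ ≤ C := by
  obtain ⟨C, hC⟩ := (hK.cthickening (r := 1)).exists_bound_of_continuousOn hf.continuousOn
  refine ⟨2 * C, fun x hx => ?_⟩
  have hball := Metric.closedBall_subset_cthickening hx 1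
  have hx' := abs_le.mp (hC x (hball (Metric.mem_closedBall_self zero_le_one)))
  have := norm_gradient_le_of_forall_le hconv fun y hy => (abs_le.mp (hC y (hball hy))).2
  linarith [hx'.1]

variable [FiniteDimensional ℝ E] [MeasurableSpace E] [BorelSpace E]

theorem measurable_gradient : Measurable (gradient f) :=
  (InnerProductSpace.toDual ℝ E).symm.continuous.measurable.comp (measurable_fderiv ℝ f)

theorem intervalIntegrable_gradient_lineMap (hf : Continuous f)
    (hconv : ∀ x y, f x + ⟪gradient f x, y - x⟫ ≤ f y) (u v : E) :
    IntervalIntegrable (fun s : ℝ => gradient f (AffineMap.lineMap u v s)) MeasureTheory.volume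
      0 1 := by
  obtain ⟨C, hC⟩ := (isCompact_Icc.image (AffineMap.lineMap_continuous (R := ℝ) (p := u) (q := v))
    ).exists_bound_norm_gradient hf hconv
  refine IntervalIntegrable.mono_fun' (g := fun _ => C) intervalIntegrable_const
    (measurable_gradient.comp AffineMap.lineMap_continuous.measurable).aestronglyMeasurable ?_
  filter_upwards [MeasureTheory.ae_restrict_mem measurableSet_uIoc] with s hs
  rw [Set.uIoc_of_le zero_le_one] at hs
  exact hC _ ⟨s, Set.Ioc_subset_Icc_self hs, rfl⟩

-- Convexity is what makes the gradient locally bounded, hence integrable along the segment.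
theorem sub_eq_inner_integral_gradient (hf : Differentiable ℝ f)
    (hconv : ∀ x y, f x + ⟪gradient f x, y - x⟫ ≤ f y) (u v : E) :
    f v - f u = ⟪∫ s in (0:ℝ)..1, gradient f ((1 - s) • u + s • v), v - u⟫ := by
  simp_rw [← AffineMap.lineMap_apply_module]
  have hint := intervalIntegrable_gradient_lineMap hf.continuous hconv u v
  have hderiv : ∀ s : ℝ, HasDerivAt (fun t => f (AffineMap.lineMap u v t))
      ⟪v - u, gradient f (AffineMap.lineMap u v s)⟫ s := by
    intro s
    have := (hf _).hasGradientAt.hasFDerivAt.comp_hasDerivAt s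
      (AffineMap.hasDerivAt_lineMap (a := u) (b := v))
    rwa [InnerProductSpace.toDual_apply_apply, real_inner_comm] at this
  have hFTC := intervalIntegral.integral_eq_sub_of_hasDerivAt (fun s _ => hderiv s)
    ⟨hint.1.const_inner (v - u), hint.2.const_inner (v - u)⟩
  have hswap := (innerSL ℝ (v - u)).intervalIntegral_comp_comm hint
  simp only [innerSL_apply_apply] at hswap
  rw [real_inner_comm, ← hswap, hFTC, AffineMap.lineMap_apply_one, AffineMap.lineMap_apply_zero]

end DiscreteGradient

section Dissipation

variable {ι R : Type*} [Fintype ι] [CommRing R] {S : Matrix ι ι R} {φ : (ι → R) → (ι → R)}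

theorem dotProduct_sub_mulVec_add_of_eq_zero {g g₀ : ι → R} (h₀ : S *ᵥ g₀ + φ g₀ = 0) :
    (g - g₀) ⬝ᵥ (S *ᵥ g + φ g) = (g - g₀) ⬝ᵥ (S *ᵥ (g - g₀)) + (g - g₀) ⬝ᵥ (φ g - φ g₀) := by
  rw [← dotProduct_add, mulVec_sub, sub_add_sub_comm, h₀, sub_zero]

variable [LinearOrder R] [IsStrictOrderedRing R]

theorem dotProduct_mulVec_nonpos_of_add_transpose_s8 {v : ι → R}
    (hS : v ⬝ᵥ ((S + Sᵀ) *ᵥ v) ≤ 0) : v ⬝ᵥ (S *ᵥ v) ≤ 0 := by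
  have hT : v ⬝ᵥ (Sᵀ *ᵥ v) = v ⬝ᵥ (S *ᵥ v) := by
    rw [dotProduct_mulVec, vecMul_transpose, dotProduct_comm]
  rw [add_mulVec, dotProduct_add, hT] at hS
  linarith

theorem dotProduct_sub_mulVec_add_nonpos (hS : ∀ v : ι → R, v ⬝ᵥ ((S + Sᵀ) *ᵥ v) ≤ 0)
    (hφ : ∀ u v : ι → R, (u - v) ⬝ᵥ (φ u - φ v) ≤ 0) {g₀ : ι → R} (h₀ : S *ᵥ g₀ + φ g₀ = 0)
    (g : ι → R) : (g - g₀) ⬝ᵥ (S *ᵥ g + φ g) ≤ 0 := by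
  rw [dotProduct_sub_mulVec_add_of_eq_zero h₀]
  exact add_nonpos (dotProduct_mulVec_nonpos_of_add_transpose_s8 (hS _)) (hφ g g₀)

theorem eq_of_dotProduct_sub_mulVec_add_eq_zero (hS : ∀ v : ι → R, v ⬝ᵥ ((S + Sᵀ) *ᵥ v) ≤ 0)
    (hφ : ∀ u v : ι → R, (u - v) ⬝ᵥ (φ u - φ v) ≤ 0)
    (hφeq : ∀ u v : ι → R, (u - v) ⬝ᵥ (φ u - φ v) = 0 → u = v) {g₀ : ι → R}
    (h₀ : S *ᵥ g₀ + φ g₀ = 0) {g : ι → R} (h : (g - g₀) ⬝ᵥ (S *ᵥ g + φ g) = 0) : g = g₀ := by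
  rw [dotProduct_sub_mulVec_add_of_eq_zero h₀] at h
  have := dotProduct_mulVec_nonpos_of_add_transpose_s8 (hS (g - g₀))
  exact hφeq g g₀ (le_antisymm (hφ g g₀) (by linarith))

end Dissipation

theorem EuclideanSpace.inner_eq_dotProduct {ι : Type*} [Fintype ι] (a b : EuclideanSpace ℝ ι) :
    ⟪a, b⟫ = (fun i => a i) ⬝ᵥ (fun i => b i) := by
  rw [EuclideanSpace.inner_eq_star_dotProduct, star_trivial, dotProduct_comm]

/-- Discrete-time Lyapunov decrease for the discrete-gradient scheme
`(x⁺ − x)/τ = S ∇̄H(x,x⁺) + φ(∇̄H(x,x⁺))`, for any step size `τ > 0`. -/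
theorem lyapunov_decrease_discrete (n : ℕ) (μ : ℝ) (hμ : 0 < μ)
    (H : EuclideanSpace ℝ (Fin n) → ℝ) (hdiff : Differentiable ℝ H)
    (hsc : ∀ u v : EuclideanSpace ℝ (Fin n),
      H v ≥ H u + ⟪gradient H u, v - u⟫ + μ / 2 * ‖v - u‖ ^ 2)
    (S : Matrix (Fin n) (Fin n) ℝ)
    (hS : ∀ v : Fin n → ℝ, v ⬝ᵥ ((S + Sᵀ) *ᵥ v) ≤ 0)
    (φ : (Fin n → ℝ) → (Fin n → ℝ))
    (hφ : ∀ u v : Fin n → ℝ, (u - v) ⬝ᵥ (φ u - φ v) ≤ 0)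
    (hφeq : ∀ u v : Fin n → ℝ, (u - v) ⬝ᵥ (φ u - φ v) = 0 → u = v)
    (xs : EuclideanSpace ℝ (Fin n))
    (heq : S *ᵥ (fun i => gradient H xs i) + φ (fun i => gradient H xs i) = 0)
    (huniq : ∀ y : EuclideanSpace ℝ (Fin n),
      S *ᵥ (fun i => gradient H y i) + φ (fun i => gradient H y i) = 0 → y = xs)
    (dH : EuclideanSpace ℝ (Fin n) → EuclideanSpace ℝ (Fin n) → EuclideanSpace ℝ (Fin n))
    (hdH : ∀ u v, dH u v = ∫ s in (0:ℝ)..1, gradient H ((1 - s) • u + s • v))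
    (τ : ℝ) (hτ : 0 < τ)
    (x : ℕ → EuclideanSpace ℝ (Fin n))
    (hrec : ∀ k, x (k + 1) - x k =
      τ • (S *ᵥ (fun i => dH (x k) (x (k + 1)) i) + φ (fun i => dH (x k) (x (k + 1)) i)))
    (V : EuclideanSpace ℝ (Fin n) → ℝ)
    (hV : ∀ y, V y = H y - H xs - ⟪gradient H xs, y - xs⟫) :
    ∀ k, V (x (k + 1)) - V (x k) ≤ 0 ∧
      (V (x (k + 1)) - V (x k) = 0 → x k = xs ∧ x (k + 1) = xs) := by
  intro k
  set u := x k
  set v := x (k + 1)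
  set g : Fin n → ℝ := fun i => dH u v i
  set g₀ : Fin n → ℝ := fun i => gradient H xs i
  have hconv : ∀ a b, H a + ⟪gradient H a, b - a⟫ ≤ H b := fun a b => by
    nlinarith [hsc a b, sq_nonneg ‖b - a‖]
  have hstep : (fun i => (v - u) i) = τ • (S *ᵥ g + φ g) := funext fun i => congrFun (hrec k) i
  have hΔ : V v - V u = τ * ((g - g₀) ⬝ᵥ (S *ᵥ g + φ g)) := by
    have hH := sub_eq_inner_integral_gradient hdiff hconv u v
    rw [← hdH] at hH
    rw [hV, hV, bregman_sub_bregman_eq_inner hH, EuclideanSpace.inner_eq_dotProduct, hstep,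
      dotProduct_smul, smul_eq_mul]
    rfl
  refine ⟨?_, fun hzero => ?_⟩
  · rw [hΔ]
    exact mul_nonpos_of_nonneg_of_nonpos hτ.le (dotProduct_sub_mulVec_add_nonpos hS hφ heq g)
  rw [hΔ] at hzero
  have hg : g = g₀ := eq_of_dotProduct_sub_mulVec_add_eq_zero hS hφ hφeq heq
    ((mul_eq_zero.mp hzero).resolve_left hτ.ne')
  have hequ : S *ᵥ g + φ g = 0 := hg ▸ heq
  have hvu : v = u := by
    rw [← sub_eq_zero]
    ext i
    simpa [hequ] using congrFun hstep i
  have hgrad : gradient H u = dH u v := by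
    simp [hdH, hvu, ← add_smul]
  have hu : u = xs := huniq u (by rwa [hgrad])
  exact ⟨hu, hvu.trans hu⟩
end

section
/- Let f: ℝᵐ → ℝ be differentiable and convex, G ∈ ℝ^{m×m} symmetric positive definite, q ∈ ℝᵐ, c ∈ ℝᵐ. Then there exists a unique q⁺ ∈ ℝᵐ satisfying G q⁺ + ∇f((q⁺ + q)/2) + c = 0. -/
/-!
The left-hand side is the gradient of `Φ p = ½⟪G p, p⟫ + 2 f((p + q)/2) + ⟪c, p⟫`. Since `f` lies
above its tangent planes, `Φ` grows at least quadratically, so it attains a minimum, where its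
gradient vanishes. Uniqueness comes from monotonicity of `∇f`: for two solutions with difference
`d`, `⟪G d, d⟫ = -2⟪∇f(m) - ∇f(m'), m - m'⟫ ≤ 0` at the two midpoints `m, m'`, hence `d = 0`.
-/

open Matrix

open Filter InnerProductSpace
open scoped Gradient RealInnerProductSpace

theorem ConvexOn.add_apply_sub_le_of_hasFDerivAt {E : Type*} [NormedAddCommGroup E]
    [NormedSpace ℝ E] {s : Set E} {f : E → ℝ} {f' : E →L[ℝ] ℝ} {x y : E}
    (hf : ConvexOn ℝ s f) (hx : x ∈ s) (hy : y ∈ s) (hf' : HasFDerivAt f f' x) :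
    f x + f' (y - x) ≤ f y := by
  let l : ℝ →ᵃ[ℝ] E := AffineMap.lineMap x y
  have hconv : ConvexOn ℝ (l ⁻¹' s) (f ∘ l) := hf.comp_affineMap l
  have hderiv : HasDerivAt (f ∘ l) (f' (y - x)) 0 :=
    HasFDerivAt.comp_hasDerivAt (0 : ℝ) (by simpa [l] using hf') AffineMap.hasDerivAt_lineMap
  have hslope := hconv.le_slope_of_hasDerivAt (by simpa [l]) (by simpa [l]) one_pos hderiv
  simp only [slope_def_field, Function.comp_apply, l, AffineMap.lineMap_apply_zero,
    AffineMap.lineMap_apply_one, sub_zero, div_one] at hslope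
  linarith

section InnerProductSpace

variable {E : Type*} [NormedAddCommGroup E] [InnerProductSpace ℝ E] [CompleteSpace E]

theorem ConvexOn.add_inner_sub_le_of_hasGradientAt {s : Set E} {f : E → ℝ} {g x y : E}
    (hf : ConvexOn ℝ s f) (hx : x ∈ s) (hy : y ∈ s) (hg : HasGradientAt f g x) :
    f x + ⟪g, y - x⟫ ≤ f y := by
  simpa using hf.add_apply_sub_le_of_hasFDerivAt hx hy hg.hasFDerivAt

theorem ConvexOn.inner_sub_sub_nonneg_of_hasGradientAt {s : Set E} {f : E → ℝ} {g g' x y : E}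
    (hf : ConvexOn ℝ s f) (hx : x ∈ s) (hy : y ∈ s) (hg : HasGradientAt f g x)
    (hg' : HasGradientAt f g' y) : 0 ≤ ⟪g - g', x - y⟫ := by
  have hxy := hf.add_inner_sub_le_of_hasGradientAt hx hy hg
  have hyx := hf.add_inner_sub_le_of_hasGradientAt hy hx hg'
  rw [← neg_sub y x, inner_neg_right] at hyx
  rw [← neg_sub y x, inner_neg_right, inner_sub_left]
  linarith

end InnerProductSpace

theorem isCoercive_of_pos {E : Type*} [NormedAddCommGroup E] [NormedSpace ℝ E]
    [FiniteDimensional ℝ E] (B : E →L[ℝ] E →L[ℝ] ℝ) (hB : ∀ u, u ≠ 0 → 0 < B u u) :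
    IsCoercive B := by
  rcases subsingleton_or_nontrivial E with hE | hE
  · exact ⟨1, one_pos, fun u => by simp [Subsingleton.elim u 0]⟩
  obtain ⟨v, hv, hmin⟩ := (isCompact_sphere (0 : E) 1).exists_isMinOn
    (NormedSpace.sphere_nonempty.mpr zero_le_one)
    (B.continuous₂.comp (continuous_id.prodMk continuous_id)).continuousOn
  refine ⟨B v v, hB v (ne_zero_of_mem_unit_sphere ⟨v, hv⟩), fun u => ?_⟩
  rcases eq_or_ne u 0 with rfl | hu
  · simp
  have hnorm : 0 < ‖u‖ := norm_pos_iff.mpr hu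
  have hunit : ‖u‖⁻¹ • u ∈ Metric.sphere (0 : E) 1 := by
    simp [norm_smul, hnorm.ne']
  have hle : B v v ≤ ‖u‖⁻¹ * ‖u‖⁻¹ * B u u := by
    simpa [mul_assoc] using hmin hunit
  calc B v v * ‖u‖ * ‖u‖ ≤ ‖u‖⁻¹ * ‖u‖⁻¹ * B u u * ‖u‖ * ‖u‖ := by gcongr
    _ = B u u := by field_simp

theorem tendsto_cocompact_atTop_of_sq_le {E : Type*} [NormedAddCommGroup E] [ProperSpace E]
    {F : E → ℝ} {a b C : ℝ} (ha : 0 < a) (hF : ∀ x, a * ‖x‖ ^ 2 - b * ‖x‖ + C ≤ F x) :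
    Tendsto F (cocompact E) atTop := by
  have hquad : Tendsto (fun r : ℝ => a * r ^ 2 - b * r + C) atTop atTop := by
    have : Tendsto (fun r : ℝ => r * (a * r - b)) atTop atTop :=
      tendsto_id.atTop_mul_atTop₀ ((tendsto_id.const_mul_atTop ha).atTop_add tendsto_const_nhds)
    refine tendsto_atTop_add_const_right _ C (this.congr fun r => ?_)
    ring
  exact tendsto_atTop_mono hF (hquad.comp tendsto_norm_cocompact_atTop)

section ImplicitMidpoint

variable {E : Type*} [NormedAddCommGroup E] [InnerProductSpace ℝ E]

noncomputable def implicitMidpointObjective (T : E →L[ℝ] E) (f : E → ℝ) (q c x : E) : ℝ :=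
  2⁻¹ * ⟪T x, x⟫ + 2 * f ((2⁻¹ : ℝ) • (x + q)) + ⟪c, x⟫

theorem hasGradientAt_implicitMidpointObjective [CompleteSpace E] {T : E →L[ℝ] E}
    (hT : (T : E →ₗ[ℝ] E).IsSymmetric) {f : E → ℝ} {q c x : E}
    (hf : DifferentiableAt ℝ f ((2⁻¹ : ℝ) • (x + q))) :
    HasGradientAt (implicitMidpointObjective T f q c)
      (T x + ∇ f ((2⁻¹ : ℝ) • (x + q)) + c) x := by
  have hquad : HasFDerivAt (fun y => ⟪T y, y⟫) (2 • innerSL ℝ (T x)) x := by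
    convert (hT.hasStrictFDerivAt_reApplyInnerSelf x).hasFDerivAt using 1
    ext y
    simp [ContinuousLinearMap.reApplyInnerSelf_apply]
  have hmid : HasFDerivAt (fun y : E => (2⁻¹ : ℝ) • (y + q))
      ((2⁻¹ : ℝ) • ContinuousLinearMap.id ℝ E) x :=
    ((hasFDerivAt_id x).add_const q).const_smul _
  have hsum : HasFDerivAt (implicitMidpointObjective T f q c) _ x :=
    ((hquad.const_mul 2⁻¹).add
      ((hf.hasGradientAt.hasFDerivAt.comp x hmid).const_mul 2)).add (innerSL ℝ c).hasFDerivAt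
  refine hsum.congr_fderiv ?_
  ext v
  simp

theorem tendsto_implicitMidpointObjective_cocompact [ProperSpace E] {T : E →L[ℝ] E}
    (hT : IsCoercive ((innerSL ℝ).comp T)) {f : E → ℝ} (hconv : ConvexOn ℝ Set.univ f) {q : E}
    (hf : DifferentiableAt ℝ f ((2⁻¹ : ℝ) • q)) (c : E) :
    Tendsto (implicitMidpointObjective T f q c) (cocompact E) atTop := by
  obtain ⟨μ, hμ, hTμ⟩ := hT
  set g := ∇ f ((2⁻¹ : ℝ) • q) + c
  refine tendsto_cocompact_atTop_of_sq_le (half_pos hμ) (b := ‖g‖) (C := 2 * f ((2⁻¹ : ℝ) • q))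
    fun x => ?_
  have htangent := hconv.add_inner_sub_le_of_hasGradientAt (Set.mem_univ _)
    (Set.mem_univ ((2⁻¹ : ℝ) • (x + q))) hf.hasGradientAt
  have hquad : μ * ‖x‖ * ‖x‖ ≤ ⟪T x, x⟫ := hTμ x
  have hlin : -(‖g‖ * ‖x‖) ≤ ⟪g, x⟫ := (abs_le.mp (abs_real_inner_le_norm g x)).1
  have hsplit :
      ⟪g, x⟫ = 2 * ⟪∇ f ((2⁻¹ : ℝ) • q), (2⁻¹ : ℝ) • (x + q) - (2⁻¹ : ℝ) • q⟫ + ⟪c, x⟫ := by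
    simp [g, inner_add_left, smul_add]
  unfold implicitMidpointObjective
  linarith

theorem exists_self_add_gradient_midpoint_add_eq_zero [FiniteDimensional ℝ E] {T : E →L[ℝ] E}
    (hT : (T : E →ₗ[ℝ] E).IsSymmetric) (hTpos : ∀ x, x ≠ 0 → 0 < ⟪T x, x⟫) {f : E → ℝ}
    (hdiff : Differentiable ℝ f) (hconv : ConvexOn ℝ Set.univ f) (q c : E) :
    ∃ p : E, T p + ∇ f ((2⁻¹ : ℝ) • (p + q)) + c = 0 := by
  have hgrad (x : E) :=
    hasGradientAt_implicitMidpointObjective hT (c := c) (hdiff ((2⁻¹ : ℝ) • (x + q)))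
  have hcont : Continuous (implicitMidpointObjective T f q c) :=
    continuous_iff_continuousAt.mpr fun x => (hgrad x).hasFDerivAt.continuousAt
  have hcoer : IsCoercive ((innerSL ℝ).comp T) := isCoercive_of_pos _ hTpos
  obtain ⟨p, hp⟩ := hcont.exists_forall_le
    (tendsto_implicitMidpointObjective_cocompact hcoer hconv (hdiff _) c)
  have hmin : IsLocalMin (implicitMidpointObjective T f q c) p := Eventually.of_forall hp
  exact ⟨p, (toDual ℝ E).map_eq_zero_iff.mp (hmin.hasFDerivAt_eq_zero (hgrad p).hasFDerivAt)⟩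

theorem eq_of_self_add_gradient_midpoint_add_eq_zero [CompleteSpace E] {T : E →L[ℝ] E}
    (hTpos : ∀ x, x ≠ 0 → 0 < ⟪T x, x⟫) {f : E → ℝ} (hdiff : Differentiable ℝ f)
    (hconv : ConvexOn ℝ Set.univ f) {q c p p' : E}
    (hp : T p + ∇ f ((2⁻¹ : ℝ) • (p + q)) + c = 0)
    (hp' : T p' + ∇ f ((2⁻¹ : ℝ) • (p' + q)) + c = 0) : p = p' := by
  by_contra hne
  have hmono := hconv.inner_sub_sub_nonneg_of_hasGradientAt (Set.mem_univ _) (Set.mem_univ _)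
    (hdiff ((2⁻¹ : ℝ) • (p + q))).hasGradientAt (hdiff ((2⁻¹ : ℝ) • (p' + q))).hasGradientAt
  have hTsub : T (p - p') = -(∇ f ((2⁻¹ : ℝ) • (p + q)) - ∇ f ((2⁻¹ : ℝ) • (p' + q))) := by
    rw [map_sub, eq_neg_iff_add_eq_zero, ← sub_zero (0 : E)]
    nth_rewrite 1 [← hp, ← hp']
    abel
  have hmid : (2⁻¹ : ℝ) • (p + q) - (2⁻¹ : ℝ) • (p' + q) = (2⁻¹ : ℝ) • (p - p') := by module
  have := hTpos (p - p') (sub_ne_zero.mpr hne)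
  rw [hTsub, inner_neg_left] at this
  rw [hmid, real_inner_smul_right] at hmono
  linarith

theorem existsUnique_self_add_gradient_midpoint_add_eq_zero [FiniteDimensional ℝ E]
    {T : E →L[ℝ] E} (hT : (T : E →ₗ[ℝ] E).IsSymmetric) (hTpos : ∀ x, x ≠ 0 → 0 < ⟪T x, x⟫)
    {f : E → ℝ} (hdiff : Differentiable ℝ f) (hconv : ConvexOn ℝ Set.univ f) (q c : E) :
    ∃! p : E, T p + ∇ f ((2⁻¹ : ℝ) • (p + q)) + c = 0 :=
  let ⟨p, hp⟩ := exists_self_add_gradient_midpoint_add_eq_zero hT hTpos hdiff hconv q c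
  ⟨p, hp, fun _ hp' => eq_of_self_add_gradient_midpoint_add_eq_zero hTpos hdiff hconv hp' hp⟩

end ImplicitMidpoint

theorem implicit_update_well_posed_general (m : ℕ)
    (f : EuclideanSpace ℝ (Fin m) → ℝ) (hdiff : Differentiable ℝ f)
    (hconv : ConvexOn ℝ Set.univ f)
    (G : Matrix (Fin m) (Fin m) ℝ) (hGpd : G.PosDef)
    (q c : EuclideanSpace ℝ (Fin m)) :
    ∃! qp : EuclideanSpace ℝ (Fin m),
      ∀ a, (G *ᵥ fun b => qp b) a + gradient f ((2⁻¹ : ℝ) • (qp + q)) a + c a = 0 := by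
  set T := toEuclideanCLM (𝕜 := ℝ) G
  have hT : (T : EuclideanSpace ℝ (Fin m) →ₗ[ℝ] EuclideanSpace ℝ (Fin m)).IsSymmetric :=
    isSymmetric_toEuclideanLin_iff.mpr hGpd.isHermitian
  have hTpos (x : EuclideanSpace ℝ (Fin m)) (hx : x ≠ 0) : 0 < ⟪T x, x⟫ := by
    rw [real_inner_comm, inner_toEuclideanCLM]
    simpa using hGpd.dotProduct_mulVec_pos (by simpa using hx)
  refine (existsUnique_congr fun qp => ?_).mpr
    (existsUnique_self_add_gradient_midpoint_add_eq_zero hT hTpos hdiff hconv q c)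
  simp [T, PiLp.ext_iff]

/-- For `f` differentiable convex, `G` symmetric positive definite,
the implicit equation `G q⁺ + ∇f((q⁺+q)/2) + c = 0` has a unique solution. -/
theorem implicit_update_well_posed (m : ℕ)
    (f : EuclideanSpace ℝ (Fin m) → ℝ) (hdiff : Differentiable ℝ f)
    (hconv : ConvexOn ℝ Set.univ f)
    (G : Matrix (Fin m) (Fin m) ℝ) (hGsym : G.IsSymm) (hGpd : G.PosDef)
    (q c : EuclideanSpace ℝ (Fin m)) :
    ∃! qp : EuclideanSpace ℝ (Fin m),
      ∀ a, (G *ᵥ fun b => qp b) a + gradient f ((2⁻¹ : ℝ) • (qp + q)) a + c a = 0 :=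
  implicit_update_well_posed_general m f hdiff hconv G hGpd q c
end

section
/- Let Q ∈ ℝⁿˣⁿ be symmetric positive semidefinite and τ > 0. Then the block matrix [[I/τ + Q, Q], [−Q, I/τ]] is invertible, and its inverse equals blockdiag-multiplication by Λ(τ)^{-1} of [[I/τ, −Q], [Q, I/τ + Q]], where Λ(τ) = (1/τ²)I + (1/τ)Q + Q². That is, [[I/τ + Q, Q], [−Q, I/τ]]^{-1} = (I₂ ⊗ Λ(τ)^{-1}) · [[I/τ, −Q], [Q, I/τ + Q]]. -/
/-!
With `S = τ⁻¹ • 1`, which commutes with `Q`, multiplying `[[Λ⁻¹S, -Λ⁻¹Q], [Λ⁻¹Q, Λ⁻¹(S + Q)]]`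
against `[[S + Q, Q], [-Q, S]]` gives diagonal blocks `Λ⁻¹(S² + SQ + Q²) = Λ⁻¹Λ = 1` and
off-diagonal blocks `±Λ⁻¹(SQ - QS) = 0`. Since `Q` is Hermitian, `Λ = (Q + S/2)² + 3S²/4` is
positive definite, so `Λ⁻¹` really is an inverse and the left inverse identifies `B⁻¹`.
-/

namespace Matrix

variable {n : Type*} [Fintype n] [DecidableEq n]

section
open scoped ComplexOrder
variable {𝕜 : Type*} [RCLike 𝕜]

theorem IsHermitian.posDef_sq_smul_one_add_smul_add_sq {Q : Matrix n n 𝕜} (hQ : Q.IsHermitian)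
    {s : ℝ} (hs : s ≠ 0) : (s ^ 2 • (1 : Matrix n n 𝕜) + s • Q + Q ^ 2).PosDef := by
  set M := Q + (s / 2) • (1 : Matrix n n 𝕜)
  have hsquare : s ^ 2 • (1 : Matrix n n 𝕜) + s • Q + Q ^ 2 = (3 * s ^ 2 / 4) • 1 + Mᴴ * M := by
    rw [conjTranspose_add, hQ.eq, conjTranspose_smul, star_trivial, conjTranspose_one,
      sq Q, add_mul, mul_add, mul_add]
    simp only [smul_mul_assoc, mul_smul_comm, one_mul, mul_one, smul_smul]
    module
  rw [hsquare]
  exact (PosDef.one.smul (by positivity)).add_posSemidef (posSemidef_conjTranspose_mul_self M)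

end

variable {R : Type*} [CommRing R]

theorem fromBlocks_mul_fromBlocks_eq_one_of_commute {A Q L : Matrix n n R} (hAQ : Commute A Q)
    (hL : L * (A * A + A * Q + Q * Q) = 1) :
    fromBlocks (L * A) (L * -Q) (L * Q) (L * (A + Q)) * fromBlocks (A + Q) Q (-Q) A = 1 := by
  have hA : A * Q = Q * A := hAQ
  rw [fromBlocks_multiply, ← fromBlocks_one]
  congr 1
  · rw [← hL]; noncomm_ring
  · simp only [mul_neg, neg_mul, mul_assoc, hA, add_neg_cancel]
  · simp only [mul_add, add_mul, mul_neg, mul_assoc, hA]; abel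
  · rw [← hL, hA]; noncomm_ring

end Matrix

open Matrix

/-- The block matrix `[[I/τ + Q, Q], [−Q, I/τ]]` is invertible with
inverse `(I₂ ⊗ Λ(τ)⁻¹) · [[I/τ, −Q], [Q, I/τ + Q]]` where
`Λ(τ) = (1/τ²)I + (1/τ)Q + Q²`. -/
theorem block_matrix_inverse (n : ℕ)
    (Q : Matrix (Fin n) (Fin n) ℝ) (hQ : Q.PosSemidef)
    (τ : ℝ) (hτ : 0 < τ)
    (Λ : Matrix (Fin n) (Fin n) ℝ)
    (hΛ : Λ = (τ ^ 2)⁻¹ • (1 : Matrix (Fin n) (Fin n) ℝ) + τ⁻¹ • Q + Q ^ 2)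
    (B : Matrix (Fin n ⊕ Fin n) (Fin n ⊕ Fin n) ℝ)
    (hB : B = Matrix.fromBlocks
      (τ⁻¹ • (1 : Matrix (Fin n) (Fin n) ℝ) + Q) Q (-Q)
      (τ⁻¹ • (1 : Matrix (Fin n) (Fin n) ℝ))) :
    IsUnit B.det ∧
    B⁻¹ = Matrix.fromBlocks
      (Λ⁻¹ * (τ⁻¹ • (1 : Matrix (Fin n) (Fin n) ℝ))) (Λ⁻¹ * (-Q))
      (Λ⁻¹ * Q) (Λ⁻¹ * (τ⁻¹ • (1 : Matrix (Fin n) (Fin n) ℝ) + Q)) := by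
  set S : Matrix (Fin n) (Fin n) ℝ := τ⁻¹ • 1
  have hΛ_posDef : Λ.PosDef := by
    rw [hΛ, ← inv_pow]
    exact hQ.1.posDef_sq_smul_one_add_smul_add_sq (inv_ne_zero hτ.ne')
  have hΛ_eq : Λ = S * S + S * Q + Q * Q := by
    rw [hΛ, ← inv_pow, sq, sq Q]
    simp only [S, smul_mul_assoc, one_mul, smul_smul]
  have hleft : Λ⁻¹ * (S * S + S * Q + Q * Q) = 1 :=
    hΛ_eq ▸ nonsing_inv_mul Λ (isUnit_iff_ne_zero.mpr hΛ_posDef.det_pos.ne')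
  have hCB := fromBlocks_mul_fromBlocks_eq_one_of_commute ((Commute.one_left Q).smul_left τ⁻¹) hleft
  rw [← hB] at hCB
  exact ⟨isUnit_det_of_left_inverse hCB, inv_eq_left_inv hCB⟩
end
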